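/- Invariance of the complementary partial trace under a unilocal trace-preserving Kraus family. Let a and b be finite nonempty types, ι a finite type, and E : ι → Matrix a a ℂ with ∑ i, (E i)ᴴ * (E i) = 1. Then for every M ∈ Matrix (a × b) (a × b) ℂ, ∑ i, ptrA(((E i) ⊗ₖ (1 : Matrix b b ℂ)) * M * ((E i) ⊗ₖ 1)ᴴ) = ptrA(M), where ptrA(M) ∈ Matrix b b ℂ is the partial trace over a, ptrA(M) j j' = ∑ k : a, M (k, j) (k, j'). -/
import Mathlib


open Matrix Kronecker

/-- Partial trace over the first factor `a`:
`ptrA M j j' = ∑ k : a, M (k, j) (k, j')`. -/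
noncomputable def ptrA {a b : Type*} [Fintype a] (M : Matrix (a × b) (a × b) ℂ) :
    Matrix b b ℂ :=
  Matrix.of fun j j' => ∑ k : a, M (k, j) (k, j')

/-- Commuting a fourfold sum: move the outer two sums inside. -/
lemma comm4 {ι a : Type*} [Fintype ι] [Fintype a] (f : ι → a → a → a → ℂ) :
    ∑ i, ∑ k, ∑ p, ∑ r, f i k p r = ∑ p, ∑ r, ∑ i, ∑ k, f i k p r := by
  calc ∑ i, ∑ k, ∑ p, ∑ r, f i k p r
      = ∑ i, ∑ p, ∑ k, ∑ r, f i k p r :=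
        Finset.sum_congr rfl fun i _ => Finset.sum_comm
    _ = ∑ p, ∑ i, ∑ k, ∑ r, f i k p r := Finset.sum_comm
    _ = ∑ p, ∑ i, ∑ r, ∑ k, f i k p r :=
        Finset.sum_congr rfl fun p _ => Finset.sum_congr rfl fun i _ => Finset.sum_comm
    _ = ∑ p, ∑ r, ∑ i, ∑ k, f i k p r :=
        Finset.sum_congr rfl fun p _ => Finset.sum_comm

/-- **Invariance of the complementary partial trace under a unilocal
trace-preserving Kraus family:** if `∑ i, (E i)ᴴ * E i = 1` then
`∑ i, Tr_A ((E i ⊗ 1) M (E i ⊗ 1)ᴴ) = Tr_A M`. -/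
theorem ptrA_kraus_invariant
    {a b ι : Type*} [Fintype a] [Fintype b] [Fintype ι]
    [Nonempty a] [Nonempty b] [DecidableEq a] [DecidableEq b]
    (E : ι → Matrix a a ℂ) (hE : ∑ i, (E i)ᴴ * E i = 1)
    (M : Matrix (a × b) (a × b) ℂ) :
    ∑ i, ptrA ((E i ⊗ₖ (1 : Matrix b b ℂ)) * M * (E i ⊗ₖ (1 : Matrix b b ℂ))ᴴ)
      = ptrA M := by
  have key : ∀ p r : a, ∑ i, ∑ k, (starRingEnd ℂ) (E i k p) * E i k r
      = if p = r then 1 else 0 := by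
    intro p r
    have h := congrFun (congrFun hE p) r
    simpa [Matrix.sum_apply, Matrix.mul_apply, Matrix.conjTranspose_apply,
      Matrix.one_apply] using h
  ext j j'
  simp only [Matrix.sum_apply, ptrA, Matrix.of_apply, Matrix.mul_apply,
    Matrix.conjTranspose_apply, Matrix.kroneckerMap_apply, Fintype.sum_prod_type,
    Matrix.one_apply, star_mul', mul_ite, mul_one, mul_zero, ite_mul, zero_mul,
    apply_ite (star : ℂ → ℂ), star_zero,
    Finset.sum_ite_eq, Finset.sum_ite_eq', Finset.mem_univ, if_true]
  have rhs : ∑ k : a, M (k, j) (k, j')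
      = ∑ p : a, ∑ r : a,
          (∑ i, ∑ k, (starRingEnd ℂ) (E i k p) * E i k r) * M (r, j) (p, j') := by
    simp [key, Finset.sum_ite_eq, ite_mul]
  rw [rhs]
  simp only [Finset.sum_mul, Finset.mul_sum]
  rw [comm4]
  refine Finset.sum_congr rfl fun p _ => Finset.sum_congr rfl fun r _ =>
    Finset.sum_congr rfl fun i _ => Finset.sum_congr rfl fun k _ => ?_
  simp only [RCLike.star_def]
  ring
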